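/- arXiv:2001.05067 — 3 statements merged into one kernel-verified Lean document; each statement's English description precedes it below -/
import Mathlib

section
/- Let H(a, φ, p_a, p̃_φ) = R(a)p_a²/2 + F(a)(p̃_φ − a)²/2 and K(a, φ, p_a, p̃_φ) = p̃_φ be smooth functions on (a₁,a₂) × ℝ³, with R, F smooth and positive. At a point (a, φ, p_a, p̃_φ), the differentials dH and dK are linearly dependent if and only if p_a = 0 and either p̃_φ = a, or F'(a)(p̃_φ − a) = 2F(a). -/
/-- For `H = R(a)p_a²/2 + F(a)(p̃_φ − a)²/2` and `K = p̃_φ` on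
`(a₁,a₂) × ℝ³`, the differentials `dH` and `dK` at a point are linearly dependent
iff `p_a = 0` and either `p̃_φ = a` or `F'(a)(p̃_φ − a) = 2F(a)`. -/
theorem stmt_1 (a₁ a₂ : ℝ) (R F : ℝ → ℝ)
    (hR : ContDiffOn ℝ (⊤ : ℕ∞) R (Set.Ioo a₁ a₂)) (hF : ContDiffOn ℝ (⊤ : ℕ∞) F (Set.Ioo a₁ a₂))
    (hRpos : ∀ x ∈ Set.Ioo a₁ a₂, 0 < R x) (hFpos : ∀ x ∈ Set.Ioo a₁ a₂, 0 < F x)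
    (H K : ℝ × ℝ × ℝ × ℝ → ℝ)
    (hH : ∀ p : ℝ × ℝ × ℝ × ℝ,
      H p = R p.1 * p.2.2.1 ^ 2 / 2 + F p.1 * (p.2.2.2 - p.1) ^ 2 / 2)
    (hK : ∀ p : ℝ × ℝ × ℝ × ℝ, K p = p.2.2.2)
    (x : ℝ × ℝ × ℝ × ℝ) (hx : x.1 ∈ Set.Ioo a₁ a₂) :
    ¬ LinearIndependent ℝ ![fderiv ℝ H x, fderiv ℝ K x]
      ↔ x.2.2.1 = 0 ∧ (x.2.2.2 = x.1 ∨ deriv F x.1 * (x.2.2.2 - x.1) = 2 * F x.1) := by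
  classical
  obtain ⟨a, φ, pa, pφ⟩ := x
  simp only at hx ⊢
  set A := deriv R a with hA
  set B := deriv F a with hB
  have hmem : Set.Ioo a₁ a₂ ∈ nhds a := isOpen_Ioo.mem_nhds hx
  have hRd : HasDerivAt R A a :=
    ((hR.contDiffAt hmem).differentiableAt (by simp)).hasDerivAt
  have hFd : HasDerivAt F B a :=
    ((hF.contDiffAt hmem).differentiableAt (by simp)).hasDerivAt
  -- projections
  let π₁ : ℝ × ℝ × ℝ × ℝ →L[ℝ] ℝ := ContinuousLinearMap.fst ℝ ℝ (ℝ × ℝ × ℝ)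
  let π₃ : ℝ × ℝ × ℝ × ℝ →L[ℝ] ℝ :=
    (ContinuousLinearMap.fst ℝ ℝ ℝ).comp
      ((ContinuousLinearMap.snd ℝ ℝ (ℝ × ℝ)).comp
        (ContinuousLinearMap.snd ℝ ℝ (ℝ × ℝ × ℝ)))
  let π₄ : ℝ × ℝ × ℝ × ℝ →L[ℝ] ℝ :=
    (ContinuousLinearMap.snd ℝ ℝ ℝ).comp
      ((ContinuousLinearMap.snd ℝ ℝ (ℝ × ℝ)).comp
        (ContinuousLinearMap.snd ℝ ℝ (ℝ × ℝ × ℝ)))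
  have hπ₁app : ∀ v : ℝ × ℝ × ℝ × ℝ, π₁ v = v.1 := fun _ => rfl
  have hπ₃app : ∀ v : ℝ × ℝ × ℝ × ℝ, π₃ v = v.2.2.1 := fun _ => rfl
  have hπ₄app : ∀ v : ℝ × ℝ × ℝ × ℝ, π₄ v = v.2.2.2 := fun _ => rfl
  have h1 : HasFDerivAt (fun p : ℝ × ℝ × ℝ × ℝ => p.1) π₁ (a, φ, pa, pφ) :=
    π₁.hasFDerivAt
  have h3 : HasFDerivAt (fun p : ℝ × ℝ × ℝ × ℝ => p.2.2.1) π₃ (a, φ, pa, pφ) :=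
    π₃.hasFDerivAt
  have h4 : HasFDerivAt (fun p : ℝ × ℝ × ℝ × ℝ => p.2.2.2) π₄ (a, φ, pa, pφ) :=
    π₄.hasFDerivAt
  set C : ℝ := A * pa ^ 2 / 2 + B * (pφ - a) ^ 2 / 2 - F a * (pφ - a) with hC
  set L : ℝ × ℝ × ℝ × ℝ →L[ℝ] ℝ :=
    C • π₁ + (R a * pa) • π₃ + (F a * (pφ - a)) • π₄ with hL
  have hLapp : ∀ v : ℝ × ℝ × ℝ × ℝ,
      L v = C * v.1 + (R a * pa) * v.2.2.1 + (F a * (pφ - a)) * v.2.2.2 := by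
    intro v
    rw [hL]
    simp only [ContinuousLinearMap.add_apply, ContinuousLinearMap.smul_apply,
      smul_eq_mul, hπ₁app, hπ₃app, hπ₄app]
  have hRc : HasFDerivAt (fun p : ℝ × ℝ × ℝ × ℝ => R p.1) (A • π₁) (a, φ, pa, pφ) :=
    hRd.comp_hasFDerivAt _ h1
  have hFc : HasFDerivAt (fun p : ℝ × ℝ × ℝ × ℝ => F p.1) (B • π₁) (a, φ, pa, pφ) :=
    hFd.comp_hasFDerivAt _ h1
  have hsub : HasFDerivAt (fun p : ℝ × ℝ × ℝ × ℝ => p.2.2.2 - p.1) (π₄ - π₁)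
      (a, φ, pa, pφ) := h4.sub h1
  have hHd : HasFDerivAt H L (a, φ, pa, pφ) := by
    have hHeq : H = fun p : ℝ × ℝ × ℝ × ℝ =>
        2⁻¹ * (R p.1 * (p.2.2.1 * p.2.2.1))
          + 2⁻¹ * (F p.1 * ((p.2.2.2 - p.1) * (p.2.2.2 - p.1))) :=
      funext fun p => by rw [hH]; ring
    rw [hHeq]
    have t1 := (hRc.mul (h3.mul h3)).const_mul (2⁻¹ : ℝ)
    have t2 := (hFc.mul (hsub.mul hsub)).const_mul (2⁻¹ : ℝ)
    have t := t1.add t2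
    have hEq : (2⁻¹ : ℝ) • (R (a, φ, pa, pφ).1 • ((a, φ, pa, pφ).2.2.1 • π₃ + (a, φ, pa, pφ).2.2.1 • π₃) +
          ((a, φ, pa, pφ).2.2.1 * (a, φ, pa, pφ).2.2.1) • A • π₁)
        + (2⁻¹ : ℝ) • (F (a, φ, pa, pφ).1 •
            (((a, φ, pa, pφ).2.2.2 - (a, φ, pa, pφ).1) • (π₄ - π₁) +
              ((a, φ, pa, pφ).2.2.2 - (a, φ, pa, pφ).1) • (π₄ - π₁)) +
          (((a, φ, pa, pφ).2.2.2 - (a, φ, pa, pφ).1) * ((a, φ, pa, pφ).2.2.2 - (a, φ, pa, pφ).1)) • B • π₁) = L := by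
      apply ContinuousLinearMap.ext
      intro v
      rw [hLapp]
      simp only [ContinuousLinearMap.add_apply, ContinuousLinearMap.smul_apply,
        ContinuousLinearMap.sub_apply, smul_eq_mul, hπ₁app, hπ₃app, hπ₄app, hC]
      ring
    exact hEq ▸ t
  have hKd : HasFDerivAt K π₄ (a, φ, pa, pφ) := by
    have : K = fun p : ℝ × ℝ × ℝ × ℝ => p.2.2.2 := funext hK
    rw [this]; exact h4
  rw [hHd.fderiv, hKd.fderiv]
  clear_value A B C L π₁ π₃ π₄
  have hRa := hRpos a hx
  have hFa := hFpos a hx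
  rw [LinearIndependent.pair_iff]
  push_neg
  constructor
  · rintro ⟨s, t, hst, hne⟩
    have e1 : s * C = 0 := by
      have := congrArg (fun f => f ((1 : ℝ), (0 : ℝ), (0 : ℝ), (0 : ℝ))) hst
      simpa [ContinuousLinearMap.add_apply, ContinuousLinearMap.smul_apply,
        smul_eq_mul, hLapp, hπ₄app, mul_eq_zero] using this
    have e3 : s * (R a * pa) = 0 := by
      have := congrArg (fun f => f ((0 : ℝ), (0 : ℝ), (1 : ℝ), (0 : ℝ))) hst
      simpa [ContinuousLinearMap.add_apply, ContinuousLinearMap.smul_apply,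
        smul_eq_mul, hLapp, hπ₄app, mul_eq_zero] using this
    have e4 : s * (F a * (pφ - a)) + t = 0 := by
      have := congrArg (fun f => f ((0 : ℝ), (0 : ℝ), (0 : ℝ), (1 : ℝ))) hst
      simpa [ContinuousLinearMap.add_apply, ContinuousLinearMap.smul_apply,
        smul_eq_mul, hLapp, hπ₄app] using this
    have hs : s ≠ 0 := by
      rintro rfl
      apply hne rfl
      simpa using e4
    have hpa : pa = 0 := by
      rcases mul_eq_zero.mp e3 with h | h
      · exact absurd h hs
      · rcases mul_eq_zero.mp h with h' | h'
        · exact absurd h' (ne_of_gt hRa)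
        · exact h'
    refine ⟨hpa, ?_⟩
    have hC0 : C = 0 := by
      rcases mul_eq_zero.mp e1 with h | h
      · exact absurd h hs
      · exact h
    rw [hC, hpa] at hC0
    have hfac : (pφ - a) * (B * (pφ - a) - 2 * F a) = 0 := by
      linear_combination (2 : ℝ) * hC0
    rcases mul_eq_zero.mp hfac with h | h
    · left; exact sub_eq_zero.mp h
    · right; exact sub_eq_zero.mp h
  · rintro ⟨hpa, hcase⟩
    refine ⟨1, -(F a * (pφ - a)), ?_, fun h => absurd h one_ne_zero⟩
    have hC0 : C = 0 := by
      rw [hC, hpa]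
      rcases hcase with h | h
      · rw [h]; ring
      · linear_combination (pφ - a) / 2 * h
    apply ContinuousLinearMap.ext
    intro v
    simp only [ContinuousLinearMap.add_apply, ContinuousLinearMap.smul_apply,
      ContinuousLinearMap.zero_apply, smul_eq_mul, hLapp, hπ₄app, hC0, hpa]
    ring
end

section
/- Let ε > 0 and let t ↦ (a(t), φ(t), p_a(t), p̃_φ(t)) be a C¹ solution of the system ȧ = R(a)p_a, φ̇ = F(a)(p̃_φ − a), ṗ_a = −R'(a)p_a²/2 − F'(a)(p̃_φ − a)²/2 + F(a)(p̃_φ − a), ṗ̃_φ = 0. Define â(t) = p̃_φ(t), φ̂(t) = φ(t) − p_a(t), p̂_a(t) = p_a(t)/ε, p̂_φ(t) = (p̃_φ(t) − a(t))/ε. Then (â, φ̂, p̂_a, p̂_φ) is a solution of the slow–fast system: dâ/dt = 0, dφ̂/dt = ε²(R'(â − εp̂_φ)p̂_a²/2 + F'(â − εp̂_φ)p̂_φ²/2), dp̂_a/dt = −εR'(â − εp̂_φ)p̂_a²/2 − εF'(â − εp̂_φ)p̂_φ²/2 + F(â − εp̂_φ)p̂_φ, dp̂_φ/dt = −R(â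 − εp̂_φ)p̂_a. -/
/-!
The transformation is affine in the old variables with constant coefficients, so the new
equations follow from linearity of the derivative. The only point is that the argument
`â - ε p̂_φ` of `R`, `F`, `R'`, `F'` in the slow–fast system is exactly the old position `a`.
-/

lemma sub_mul_div_sub_cancel {K : Type*} [Field K] {ε : K} (hε : ε ≠ 0) (x y : K) :
    x - ε * ((x - y) / ε) = y := by
  rw [mul_div_cancel₀ _ hε, sub_sub_cancel]

theorem stmt_3_general (R F : ℝ → ℝ)
    (ε : ℝ) (hε : 0 < ε)
    (a φ pa pφ : ℝ → ℝ)
    (ha : ∀ t : ℝ, HasDerivAt a (R (a t) * pa t) t)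
    (hφ : ∀ t : ℝ, HasDerivAt φ (F (a t) * (pφ t - a t)) t)
    (hpa : ∀ t : ℝ, HasDerivAt pa
      (-(deriv R (a t)) * (pa t) ^ 2 / 2 - deriv F (a t) * (pφ t - a t) ^ 2 / 2
        + F (a t) * (pφ t - a t)) t)
    (hpφ : ∀ t : ℝ, HasDerivAt pφ 0 t)
    (ahat φhat pahat pφhat : ℝ → ℝ)
    (hahat : ∀ t : ℝ, ahat t = pφ t)
    (hφhat : ∀ t : ℝ, φhat t = φ t - pa t)
    (hpahat : ∀ t : ℝ, pahat t = pa t / ε)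
    (hpφhat : ∀ t : ℝ, pφhat t = (pφ t - a t) / ε) :
    ∀ t : ℝ,
      HasDerivAt ahat 0 t
      ∧ HasDerivAt φhat
          (ε ^ 2 * (deriv R (ahat t - ε * pφhat t) * (pahat t) ^ 2 / 2
            + deriv F (ahat t - ε * pφhat t) * (pφhat t) ^ 2 / 2)) t
      ∧ HasDerivAt pahat
          (-ε * deriv R (ahat t - ε * pφhat t) * (pahat t) ^ 2 / 2
            - ε * deriv F (ahat t - ε * pφhat t) * (pφhat t) ^ 2 / 2
            + F (ahat t - ε * pφhat t) * pφhat t) t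
      ∧ HasDerivAt pφhat (-(R (ahat t - ε * pφhat t) * pahat t)) t := by
  obtain rfl : ahat = fun t => pφ t := funext hahat
  obtain rfl : φhat = fun t => φ t - pa t := funext hφhat
  obtain rfl : pahat = fun t => pa t / ε := funext hpahat
  obtain rfl : pφhat = fun t => (pφ t - a t) / ε := funext hpφhat
  intro t
  beta_reduce
  simp only [sub_mul_div_sub_cancel hε.ne']
  refine ⟨hpφ t, ((hφ t).sub (hpa t)).congr_deriv ?_, ((hpa t).div_const ε).congr_deriv ?_,
    (((hpφ t).sub (ha t)).div_const ε).congr_deriv ?_⟩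
  all_goals field_simp
  all_goals ring

/-- The guiding-centre transformation composed with the momentum scaling
carries solutions of the magnetic system to solutions of the slow–fast system. -/
theorem stmt_3 (a₁ a₂ : ℝ) (R F : ℝ → ℝ)
    (hR : ContDiffOn ℝ 1 R (Set.Ioo a₁ a₂)) (hF : ContDiffOn ℝ 1 F (Set.Ioo a₁ a₂))
    (hRpos : ∀ x ∈ Set.Ioo a₁ a₂, 0 < R x) (hFpos : ∀ x ∈ Set.Ioo a₁ a₂, 0 < F x)
    (ε : ℝ) (hε : 0 < ε)
    (a φ pa pφ : ℝ → ℝ)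
    (ha_mem : ∀ t : ℝ, a t ∈ Set.Ioo a₁ a₂)
    (ha : ∀ t : ℝ, HasDerivAt a (R (a t) * pa t) t)
    (hφ : ∀ t : ℝ, HasDerivAt φ (F (a t) * (pφ t - a t)) t)
    (hpa : ∀ t : ℝ, HasDerivAt pa
      (-(deriv R (a t)) * (pa t) ^ 2 / 2 - deriv F (a t) * (pφ t - a t) ^ 2 / 2
        + F (a t) * (pφ t - a t)) t)
    (hpφ : ∀ t : ℝ, HasDerivAt pφ 0 t)
    (ahat φhat pahat pφhat : ℝ → ℝ)
    (hahat : ∀ t : ℝ, ahat t = pφ t)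
    (hφhat : ∀ t : ℝ, φhat t = φ t - pa t)
    (hpahat : ∀ t : ℝ, pahat t = pa t / ε)
    (hpφhat : ∀ t : ℝ, pφhat t = (pφ t - a t) / ε) :
    ∀ t : ℝ,
      HasDerivAt ahat 0 t
      ∧ HasDerivAt φhat
          (ε ^ 2 * (deriv R (ahat t - ε * pφhat t) * (pahat t) ^ 2 / 2
            + deriv F (ahat t - ε * pφhat t) * (pφhat t) ^ 2 / 2)) t
      ∧ HasDerivAt pahat
          (-ε * deriv R (ahat t - ε * pφhat t) * (pahat t) ^ 2 / 2
            - ε * deriv F (ahat t - ε * pφhat t) * (pφhat t) ^ 2 / 2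
            + F (ahat t - ε * pφhat t) * pφhat t) t
      ∧ HasDerivAt pφhat (-(R (ahat t - ε * pφhat t) * pahat t)) t :=
  stmt_3_general R F ε hε a φ pa pφ ha hφ hpa hpφ ahat φhat pahat pφhat hahat hφhat hpahat hpφhat
end

section
/- Let R and F be C¹ positive real functions defined near κ ∈ ℝ, let Ê > 0, and let A₊(ε), A₋(ε) be continuous functions on (−ε₀, ε₀) with A₊(0) = √(2Ê/F(κ)) = −A₋(0), satisfying 2Ê − F(κ − εA_±(ε))A_±(ε)² = 0 with these roots simple. Define T(ε) = 2·∫_{A₋(ε)}^{A₊(ε)} du / (√(R(κ − εu)) · √(2Ê − F(κ − εu)u²)) (a convergent improper integral for all sufficiently small |ε|). Then lim_{ε→0} T(ε) = 2π/√(R(κ)F(κ)). -/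
/-!
The affine change of variables `u = intervalParam A₋ A₊ t` moves the turning points to `±1`.
Near each simple turning point the slope of `2Ê - F(κ - εu)u²` stays bounded away from zero
uniformly for small `ε`, and between them the function stays bounded below, so it dominates
`c (A₊ - u)(u - A₋)`. The rescaled integrands are therefore dominated by `C / √(1 - t²)`, and
dominated convergence gives the limit `∫_{-1}^{1} dt / (√(R κ F κ) √(1 - t²)) = π / √(R κ F κ)`.
-/

open Real MeasureTheory Filter Topology Set
open scoped Interval

theorem intervalIntegrable_inv_sqrt_one_sub_sq :
    IntervalIntegrable (fun t : ℝ => (√(1 - t ^ 2))⁻¹) volume (-1) 1 := by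
  refine intervalIntegral.intervalIntegrable_deriv_of_nonneg (g := arcsin)
    continuous_arcsin.continuousOn (fun t ht => ?_) (fun t _ => by positivity)
  simp only [min_eq_left (by norm_num : (-1 : ℝ) ≤ 1), max_eq_right (by norm_num : (-1 : ℝ) ≤ 1)]
    at ht
  simpa using hasDerivAt_arcsin ht.1.ne' ht.2.ne

theorem integral_inv_sqrt_one_sub_sq : ∫ t in (-1 : ℝ)..1, (√(1 - t ^ 2))⁻¹ = π := by
  rw [intervalIntegral.integral_eq_sub_of_hasDerivAt_of_le (by norm_num)
    continuous_arcsin.continuousOn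
    (fun t ht => by simpa using hasDerivAt_arcsin ht.1.ne' ht.2.ne)
    intervalIntegrable_inv_sqrt_one_sub_sq, arcsin_one, arcsin_neg_one]
  ring

noncomputable def intervalParam (Q P t : ℝ) : ℝ := (P + Q) / 2 + (P - Q) / 2 * t

theorem sub_intervalParam_mul_intervalParam_sub (Q P t : ℝ) :
    (P - intervalParam Q P t) * (intervalParam Q P t - Q) = ((P - Q) / 2) ^ 2 * (1 - t ^ 2) := by
  unfold intervalParam; ring

theorem intervalParam_mem_Ioo {Q P t : ℝ} (hQP : Q < P) (ht : t ∈ Ioo (-1 : ℝ) 1) :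
    intervalParam Q P t ∈ Ioo Q P := by
  unfold intervalParam
  constructor <;> nlinarith [ht.1, ht.2]

theorem intervalIntegral_eq_integral_intervalParam (f : ℝ → ℝ) (Q P : ℝ) :
    ∫ u in Q..P, f u = ∫ t in (-1 : ℝ)..1, (P - Q) / 2 * f (intervalParam Q P t) := by
  rcases eq_or_ne P Q with rfl | hPQ
  · simp
  have hm : (P - Q) / 2 ≠ 0 := div_ne_zero (sub_ne_zero.2 hPQ) two_ne_zero
  rw [intervalIntegral.integral_const_mul]
  unfold intervalParam
  rw [intervalIntegral.integral_comp_add_mul f hm, smul_eq_mul, ← mul_assoc, mul_inv_cancel₀ hm,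
    one_mul]
  congr 1 <;> ring

theorem IntervalIntegrable.of_intervalParam {f : ℝ → ℝ} {Q P : ℝ} (hPQ : P ≠ Q)
    (hf : IntervalIntegrable (fun t => f (intervalParam Q P t)) volume (-1) 1) :
    IntervalIntegrable f volume Q P := by
  have hm : (P - Q) / 2 ≠ 0 := div_ne_zero (sub_ne_zero.2 hPQ) two_ne_zero
  have h1 := (IntervalIntegrable.comp_mul_left_iff (f := fun x => f ((P + Q) / 2 + x))
    (a := -((P - Q) / 2)) (b := (P - Q) / 2) hm).1
  rw [neg_div, div_self hm] at h1
  refine (IntervalIntegrable.comp_add_left_iff (c := (P + Q) / 2)).1 ?_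
  convert h1 hf using 1 <;> ring

theorem ae_restrict_uIoc_mem_Ioo :
    ∀ᵐ t ∂(volume.restrict (Ι (-1 : ℝ) 1)), t ∈ Ioo (-1 : ℝ) 1 := by
  rw [uIoc_of_le (by norm_num), Measure.restrict_congr_set Ioo_ae_eq_Ioc.symm]
  exact ae_restrict_mem measurableSet_Ioo

section Rescaling

variable {h : ℝ → ℝ} {Q P C : ℝ}

theorem norm_mul_comp_intervalParam_le (hQP : Q < P)
    (hbound : ∀ u ∈ Ioo Q P, ‖h u‖ ≤ C * (√((P - u) * (u - Q)))⁻¹) {t : ℝ}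
    (ht : t ∈ Ioo (-1 : ℝ) 1) :
    ‖(P - Q) / 2 * h (intervalParam Q P t)‖ ≤ C * (√(1 - t ^ 2))⁻¹ := by
  have hPQ : P - Q ≠ 0 := by linarith
  have hm : 0 < (P - Q) / 2 := by linarith
  have hs : 0 < √(1 - t ^ 2) := sqrt_pos.2 (by nlinarith [ht.1, ht.2])
  calc ‖(P - Q) / 2 * h (intervalParam Q P t)‖
      ≤ (P - Q) / 2 * (C * (√(((P - Q) / 2) ^ 2 * (1 - t ^ 2)))⁻¹) := by
        rw [norm_mul, norm_of_nonneg hm.le, ← sub_intervalParam_mul_intervalParam_sub]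
        exact mul_le_mul_of_nonneg_left (hbound _ (intervalParam_mem_Ioo hQP ht)) hm.le
    _ = C * (√(1 - t ^ 2))⁻¹ := by
        rw [sqrt_mul (sq_nonneg _), sqrt_sq hm.le]
        field_simp

theorem aestronglyMeasurable_mul_comp_intervalParam (hQP : Q < P)
    (hcont : ContinuousOn h (Ioo Q P)) :
    AEStronglyMeasurable (fun t => (P - Q) / 2 * h (intervalParam Q P t))
      (volume.restrict (Ι (-1 : ℝ) 1)) := by
  have hφ : ContinuousOn (fun t => h (intervalParam Q P t)) (Ioo (-1) 1) :=
    hcont.comp (by unfold intervalParam; fun_prop) fun t ht => intervalParam_mem_Ioo hQP ht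
  rw [uIoc_of_le (by norm_num), Measure.restrict_congr_set Ioo_ae_eq_Ioc.symm]
  exact (hφ.const_smul ((P - Q) / 2)).aestronglyMeasurable measurableSet_Ioo

theorem intervalIntegrable_of_le_inv_sqrt (hQP : Q < P) (hcont : ContinuousOn h (Ioo Q P))
    (hbound : ∀ u ∈ Ioo Q P, ‖h u‖ ≤ C * (√((P - u) * (u - Q)))⁻¹) :
    IntervalIntegrable h volume Q P := by
  have hPQ : P - Q ≠ 0 := by linarith
  have hres : IntervalIntegrable (fun t => (P - Q) / 2 * h (intervalParam Q P t)) volume (-1) 1 :=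
    (intervalIntegrable_inv_sqrt_one_sub_sq.const_mul C).mono_fun'
      (aestronglyMeasurable_mul_comp_intervalParam hQP hcont)
      (ae_restrict_uIoc_mem_Ioo.mono fun t ht => norm_mul_comp_intervalParam_le hQP hbound ht)
  refine IntervalIntegrable.of_intervalParam hQP.ne' ?_
  convert hres.const_mul ((P - Q) / 2)⁻¹ using 2
  field_simp

end Rescaling

theorem tendsto_intervalIntegral_of_le_inv_sqrt {ι : Type*} {l : Filter ι}
    [l.IsCountablyGenerated] {Q P : ι → ℝ} {h : ι → ℝ → ℝ} {C L : ℝ}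
    (hQP : ∀ᶠ i in l, Q i < P i)
    (hcont : ∀ᶠ i in l, ContinuousOn (h i) (Ioo (Q i) (P i)))
    (hbound : ∀ᶠ i in l, ∀ u ∈ Ioo (Q i) (P i), ‖h i u‖ ≤ C * (√((P i - u) * (u - Q i)))⁻¹)
    (hlim : ∀ t ∈ Ioo (-1 : ℝ) 1, Tendsto
      (fun i => (P i - Q i) / 2 * h i (intervalParam (Q i) (P i) t)) l
      (𝓝 (L * (√(1 - t ^ 2))⁻¹))) :
    Tendsto (fun i => ∫ u in Q i..P i, h i u) l (𝓝 (L * π)) := by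
  have hval : ∫ t in (-1 : ℝ)..1, L * (√(1 - t ^ 2))⁻¹ = L * π := by
    rw [intervalIntegral.integral_const_mul, integral_inv_sqrt_one_sub_sq]
  rw [← hval]
  refine Tendsto.congr
    (fun i => (intervalIntegral_eq_integral_intervalParam (h i) (Q i) (P i)).symm) ?_
  refine intervalIntegral.tendsto_integral_filter_of_dominated_convergence
    (fun t => C * (√(1 - t ^ 2))⁻¹) ?_ ?_
    (intervalIntegrable_inv_sqrt_one_sub_sq.const_mul C) ?_
  · filter_upwards [hQP, hcont] with i hi hci
    exact aestronglyMeasurable_mul_comp_intervalParam hi hci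
  · filter_upwards [hQP, hbound] with i hi hbi
    exact (ae_restrict_iff' measurableSet_uIoc).1 <|
      ae_restrict_uIoc_mem_Ioo.mono fun t ht => norm_mul_comp_intervalParam_le hi hbi ht
  · exact (ae_restrict_iff' measurableSet_uIoc).1 <| ae_restrict_uIoc_mem_Ioo.mono hlim

theorem norm_inv_sqrt_mul_sqrt_le {r g ρ c q : ℝ} (hρ : 0 < ρ) (hc : 0 < c) (hq : 0 < q)
    (hr : ρ ≤ r) (hg : c * q ≤ g) : ‖(√r * √g)⁻¹‖ ≤ (√ρ * √c)⁻¹ * (√q)⁻¹ := by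
  have hpos : 0 < √ρ * √(c * q) := by positivity
  rw [norm_inv, norm_of_nonneg (by positivity), ← mul_inv, mul_assoc, ← sqrt_mul hc.le]
  exact inv_anti₀ hpos (mul_le_mul (sqrt_le_sqrt hr) (sqrt_le_sqrt hg) (sqrt_nonneg _)
    (sqrt_nonneg _))

theorem mul_sub_le_sub_of_le_hasDerivAt {g g' : ℝ → ℝ} {a b C : ℝ} (hab : a ≤ b)
    (hg : ∀ u ∈ Icc a b, HasDerivAt g (g' u) u) (hC : ∀ u ∈ Icc a b, C ≤ g' u) :
    C * (b - a) ≤ g b - g a := by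
  refine (convex_Icc a b).mul_sub_le_image_sub_of_le_deriv
    (fun u hu => (hg u hu).continuousAt.continuousWithinAt)
    (fun u hu => (hg u (interior_subset hu)).differentiableAt.differentiableWithinAt)
    (fun u hu => ?_) a ⟨le_rfl, hab⟩ b ⟨hab, le_rfl⟩ hab
  rw [(hg u (interior_subset hu)).deriv]
  exact hC u (interior_subset hu)

theorem mul_sub_mul_sub_le_of_hasDerivAt {g g' : ℝ → ℝ} {Q q p P c₁ c₂ D : ℝ}
    (hQq : Q ≤ q) (hqp : q ≤ p) (hpP : p ≤ P) (hD : 0 < D) (hPQ : P - Q ≤ D)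
    (hc₁ : 0 ≤ c₁) (hc₂ : 0 ≤ c₂) (hg : ∀ u ∈ Icc Q P, HasDerivAt g (g' u) u)
    (hgQ : g Q = 0) (hgP : g P = 0) (hleft : ∀ u ∈ Icc Q q, c₁ ≤ g' u)
    (hright : ∀ u ∈ Icc p P, g' u ≤ -c₁) (hmid : ∀ u ∈ Icc q p, c₂ ≤ g u) :
    ∀ u ∈ Icc Q P, min (c₁ / D) (c₂ / D ^ 2) * ((P - u) * (u - Q)) ≤ g u := by
  intro u hu
  have hPu : 0 ≤ P - u := by linarith [hu.2]
  have huQ : 0 ≤ u - Q := by linarith [hu.1]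
  have hc₁D : min (c₁ / D) (c₂ / D ^ 2) * D ≤ c₁ :=
    (le_div_iff₀ hD).1 (min_le_left _ _)
  have hc₂D : min (c₁ / D) (c₂ / D ^ 2) * D ^ 2 ≤ c₂ :=
    (le_div_iff₀ (by positivity)).1 (min_le_right _ _)
  have hc₀ : 0 ≤ min (c₁ / D) (c₂ / D ^ 2) := by positivity
  rcases le_total u q with huq | hqu
  · have hsub : Icc Q u ⊆ Icc Q P := Icc_subset_Icc le_rfl hu.2
    have hmvt := mul_sub_le_sub_of_le_hasDerivAt hu.1 (fun v hv => hg v (hsub hv))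
      (fun v hv => hleft v ⟨hv.1, hv.2.trans huq⟩)
    rw [hgQ, sub_zero] at hmvt
    nlinarith [mul_le_mul_of_nonneg_left (show P - u ≤ D by linarith [hu.1]) hc₀]
  rcases le_total u p with hup | hpu
  · nlinarith [hmid u ⟨hqu, hup⟩, mul_le_mul_of_nonneg_left
      (show (P - u) * (u - Q) ≤ D ^ 2 by nlinarith) hc₀]
  · have hsub : Icc u P ⊆ Icc Q P := Icc_subset_Icc hu.1 le_rfl
    have hmvt := mul_sub_le_sub_of_le_hasDerivAt hu.2 (fun v hv => (hg v (hsub hv)).neg)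
      (fun v hv => le_neg.2 (hright v ⟨hpu.trans hv.1, hv.2⟩))
    rw [Pi.neg_apply, Pi.neg_apply, hgP] at hmvt
    nlinarith [mul_le_mul_of_nonneg_left (show u - Q ≤ D by linarith [hu.2]) hc₀]

theorem IsCompact.eventually_forall_mem_of_continuousAt {X Y Z : Type*} [TopologicalSpace X]
    [TopologicalSpace Y] [TopologicalSpace Z] {K : Set Y} (hK : IsCompact K) {f : X × Y → Z}
    {x₀ : X} {s : Set Z} (hs : IsOpen s) (hf : ∀ y ∈ K, ContinuousAt f (x₀, y))
    (hfs : ∀ y ∈ K, f (x₀, y) ∈ s) : ∀ᶠ x in 𝓝 x₀, ∀ y ∈ K, f (x, y) ∈ s :=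
  hK.eventually_forall_of_forall_eventually fun y hy => hf y hy (hs.mem_nhds (hfs y hy))

theorem ContinuousAt.comp_sub_mul {h : ℝ → ℝ} {κ : ℝ} (hh : ContinuousAt h κ) (u : ℝ) :
    ContinuousAt (fun p : ℝ × ℝ => h (κ - p.1 * p.2)) (0, u) :=
  hh.comp_of_eq (by fun_prop) (by simp)

section PeriodIntegral

variable {R F : ℝ → ℝ} {U : Set ℝ} {κ E a : ℝ}

/-- `T(ε) = 2 ∫_{A₋(ε)}^{A₊(ε)} periodIntegrand R F κ E ε u du`. -/
noncomputable def periodIntegrand (R F : ℝ → ℝ) (κ E ε u : ℝ) : ℝ :=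
  (√(R (κ - ε * u)) * √(2 * E - F (κ - ε * u) * u ^ 2))⁻¹

theorem hasDerivAt_two_mul_sub_mul_sq {ε u : ℝ} (hF : DifferentiableAt ℝ F (κ - ε * u)) :
    HasDerivAt (fun v => 2 * E - F (κ - ε * v) * v ^ 2)
      (ε * deriv F (κ - ε * u) * u ^ 2 - 2 * u * F (κ - ε * u)) u := by
  have hin : HasDerivAt (fun v => κ - ε * v) (-ε) u := by
    simpa using ((hasDerivAt_id u).const_mul ε).const_sub κ
  refine (((hF.hasDerivAt.comp u hin).mul (hasDerivAt_pow 2 u)).const_sub (2 * E)).congr_deriv ?_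
  simp only [Function.comp_apply]
  ring

theorem eventually_forall_mem_Icc_sub_mul_mem (hU : IsOpen U) (hκ : κ ∈ U) (K : ℝ) :
    ∀ᶠ ε in 𝓝 (0 : ℝ), ∀ u ∈ Icc (-K) K, κ - ε * u ∈ U :=
  isCompact_Icc.eventually_forall_mem_of_continuousAt (f := fun p : ℝ × ℝ => κ - p.1 * p.2) hU
    (fun _ _ => by fun_prop) (by simpa using fun _ _ _ => hκ)

theorem exists_eventually_mul_le_two_mul_sub {Ap Am : ℝ → ℝ} (hU : IsOpen U) (hκ : κ ∈ U)
    (hF : DifferentiableOn ℝ F U) (hFc : ContinuousAt F κ) (hF' : ContinuousAt (deriv F) κ)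
    (hE : 0 < E) (ha : 0 < a) (ha2 : F κ * a ^ 2 = 2 * E)
    (hAp : ∀ᶠ ε in 𝓝 0, Ap ε ∈ Ioo (a / 2) (3 * a / 2) ∧ 2 * E - F (κ - ε * Ap ε) * Ap ε ^ 2 = 0)
    (hAm : ∀ᶠ ε in 𝓝 0, Am ε ∈ Ioo (-(3 * a / 2)) (-(a / 2)) ∧
      2 * E - F (κ - ε * Am ε) * Am ε ^ 2 = 0) :
    ∃ c > 0, ∀ᶠ ε in 𝓝 (0 : ℝ), ∀ u ∈ Icc (Am ε) (Ap ε),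
      c * ((Ap ε - u) * (u - Am ε)) ≤ 2 * E - F (κ - ε * u) * u ^ 2 := by
  have hFκ : 0 < F κ := by nlinarith
  -- At `ε = 0` the slope is `-2 u F κ` and the value on `[-a/2, a/2]` is at least `3E/2`; these
  -- bounds persist, uniformly in `u` on compact ranges, for small `ε`.
  set c₁ := a * F κ / 2
  have hslope : ∀ u, ContinuousAt (fun p : ℝ × ℝ =>
      p.1 * deriv F (κ - p.1 * p.2) * p.2 ^ 2 - 2 * p.2 * F (κ - p.1 * p.2)) (0, u) := fun u =>
    ((continuousAt_fst.mul (hF'.comp_sub_mul u)).mul (continuousAt_snd.pow 2)).sub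
      ((continuousAt_const.mul continuousAt_snd).mul (hFc.comp_sub_mul u))
  have hright : ∀ᶠ ε in 𝓝 (0 : ℝ), ∀ u ∈ Icc (a / 2) (2 * a),
      ε * deriv F (κ - ε * u) * u ^ 2 - 2 * u * F (κ - ε * u) ∈ Iio (-c₁) :=
    isCompact_Icc.eventually_forall_mem_of_continuousAt isOpen_Iio (fun u _ => hslope u)
      (fun u hu => by simp only [mem_Iio, c₁, zero_mul, sub_zero]; nlinarith [hu.1])
  have hleft : ∀ᶠ ε in 𝓝 (0 : ℝ), ∀ u ∈ Icc (-(2 * a)) (-(a / 2)),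
      ε * deriv F (κ - ε * u) * u ^ 2 - 2 * u * F (κ - ε * u) ∈ Ioi c₁ :=
    isCompact_Icc.eventually_forall_mem_of_continuousAt isOpen_Ioi (fun u _ => hslope u)
      (fun u hu => by simp only [mem_Ioi, c₁, zero_mul, sub_zero]; nlinarith [hu.2])
  have hmid : ∀ᶠ ε in 𝓝 (0 : ℝ), ∀ u ∈ Icc (-(a / 2)) (a / 2),
      2 * E - F (κ - ε * u) * u ^ 2 ∈ Ioi E :=
    isCompact_Icc.eventually_forall_mem_of_continuousAt
      (f := fun p : ℝ × ℝ => 2 * E - F (κ - p.1 * p.2) * p.2 ^ 2) isOpen_Ioi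
      (fun u _ => continuousAt_const.sub ((hFc.comp_sub_mul u).mul (continuousAt_snd.pow 2)))
      (fun u hu => by
        have hu2 : u ^ 2 ≤ a ^ 2 / 4 := by nlinarith [hu.1, hu.2]
        simp only [mem_Ioi, zero_mul, sub_zero]
        nlinarith [mul_le_mul_of_nonneg_left hu2 hFκ.le])
  refine ⟨min (c₁ / (3 * a)) (E / (3 * a) ^ 2), by positivity, ?_⟩
  filter_upwards [eventually_forall_mem_Icc_sub_mul_mem hU hκ (2 * a), hright, hleft, hmid,
    hAp, hAm] with ε hεU hεr hεl hεm ⟨hP, hProot⟩ ⟨hQ, hQroot⟩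
  refine mul_sub_mul_sub_le_of_hasDerivAt (q := -(a / 2)) (p := a / 2) hQ.2.le (by linarith)
    hP.1.le (by positivity) (by linarith [hP.2, hQ.1]) (by positivity) hE.le
    (fun u hu => hasDerivAt_two_mul_sub_mul_sq (hF.differentiableAt (hU.mem_nhds
      (hεU u ⟨by linarith [hu.1, hQ.1], by linarith [hu.2, hP.2]⟩))))
    hQroot hProot (fun u hu => (hεl u ⟨by linarith [hu.1, hQ.1], hu.2⟩).le)
    (fun u hu => (hεr u ⟨hu.1, by linarith [hu.2, hP.2]⟩).le) (fun u hu => (hεm u hu).le)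

theorem exists_eventually_norm_periodIntegrand_le {Ap Am : ℝ → ℝ} (hU : IsOpen U) (hκ : κ ∈ U)
    (hR : ContinuousOn R U) (hRκ : 0 < R κ) (hF : DifferentiableOn ℝ F U)
    (hF' : ContinuousAt (deriv F) κ) (hE : 0 < E) (ha : 0 < a) (ha2 : F κ * a ^ 2 = 2 * E)
    (hApt : Tendsto Ap (𝓝 0) (𝓝 a)) (hAmt : Tendsto Am (𝓝 0) (𝓝 (-a)))
    (hroots : ∀ᶠ ε in 𝓝 0, 2 * E - F (κ - ε * Ap ε) * Ap ε ^ 2 = 0 ∧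
      2 * E - F (κ - ε * Am ε) * Am ε ^ 2 = 0) :
    ∃ C, ∀ᶠ ε in 𝓝 (0 : ℝ), Am ε < Ap ε ∧
      ContinuousOn (periodIntegrand R F κ E ε) (Ioo (Am ε) (Ap ε)) ∧
      ∀ u ∈ Ioo (Am ε) (Ap ε),
        ‖periodIntegrand R F κ E ε u‖ ≤ C * (√((Ap ε - u) * (u - Am ε)))⁻¹ := by
  have hAp : ∀ᶠ ε in 𝓝 0, Ap ε ∈ Ioo (a / 2) (3 * a / 2) ∧
      2 * E - F (κ - ε * Ap ε) * Ap ε ^ 2 = 0 :=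
    (hApt.eventually_mem (Ioo_mem_nhds (by linarith) (by linarith))).and
      (hroots.mono fun _ h => h.1)
  have hAm : ∀ᶠ ε in 𝓝 0, Am ε ∈ Ioo (-(3 * a / 2)) (-(a / 2)) ∧
      2 * E - F (κ - ε * Am ε) * Am ε ^ 2 = 0 :=
    (hAmt.eventually_mem (Ioo_mem_nhds (by linarith) (by linarith))).and
      (hroots.mono fun _ h => h.2)
  have hRlow : ∀ᶠ ε in 𝓝 (0 : ℝ), ∀ u ∈ Icc (-(2 * a)) (2 * a), R (κ - ε * u) ∈ Ioi (R κ / 2) :=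
    isCompact_Icc.eventually_forall_mem_of_continuousAt (f := fun p : ℝ × ℝ => R (κ - p.1 * p.2))
      isOpen_Ioi (fun u _ => (hR.continuousAt (hU.mem_nhds hκ)).comp_sub_mul u)
      (fun u _ => by simp only [mem_Ioi, zero_mul, sub_zero]; linarith)
  obtain ⟨c, hc, hquad⟩ := exists_eventually_mul_le_two_mul_sub hU hκ hF
    (hF.continuousOn.continuousAt (hU.mem_nhds hκ)) hF' hE ha ha2 hAp hAm
  refine ⟨(√(R κ / 2) * √c)⁻¹, ?_⟩
  filter_upwards [eventually_forall_mem_Icc_sub_mul_mem hU hκ (2 * a), hRlow, hquad, hAp, hAm]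
    with ε hεU hεR hεq ⟨hP, _⟩ ⟨hQ, _⟩
  have hK : ∀ u ∈ Ioo (Am ε) (Ap ε), u ∈ Icc (-(2 * a)) (2 * a) := fun u hu =>
    ⟨by linarith [hu.1, hQ.1], by linarith [hu.2, hP.2]⟩
  have hq : ∀ u ∈ Ioo (Am ε) (Ap ε), 0 < (Ap ε - u) * (u - Am ε) := fun u hu =>
    mul_pos (by linarith [hu.2]) (by linarith [hu.1])
  have hmaps : MapsTo (fun u => κ - ε * u) (Ioo (Am ε) (Ap ε)) U := fun u hu => hεU u (hK u hu)
  refine ⟨by linarith [hP.1, hQ.2], ?_, fun u hu => norm_inv_sqrt_mul_sqrt_le (by positivity) hc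
    (hq u hu) (hεR u (hK u hu)).le (hεq u (Ioo_subset_Icc_self hu))⟩
  refine ((hR.comp (by fun_prop) hmaps).sqrt.mul (continuousOn_const.sub
    ((hF.continuousOn.comp (by fun_prop) hmaps).mul (continuousOn_pow 2))).sqrt).inv₀
    fun u hu => mul_ne_zero (sqrt_pos.2 ?_).ne' (sqrt_pos.2 ?_).ne'
  · exact (half_pos hRκ).trans (hεR u (hK u hu))
  · exact (mul_pos hc (hq u hu)).trans_le (hεq u (Ioo_subset_Icc_self hu))

theorem tendsto_mul_periodIntegrand_intervalParam {Ap Am : ℝ → ℝ} (hR : ContinuousAt R κ)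
    (hF : ContinuousAt F κ) (hRκ : 0 < R κ) (hFκ : 0 < F κ) (hE : 0 < E)
    (hAp : Tendsto Ap (𝓝 0) (𝓝 √(2 * E / F κ))) (hAm : Tendsto Am (𝓝 0) (𝓝 (-√(2 * E / F κ))))
    {t : ℝ} (ht : t ∈ Ioo (-1 : ℝ) 1) :
    Tendsto (fun ε => (Ap ε - Am ε) / 2 *
        periodIntegrand R F κ E ε (intervalParam (Am ε) (Ap ε) t)) (𝓝 0)
      (𝓝 ((√(R κ * F κ))⁻¹ * (√(1 - t ^ 2))⁻¹)) := by
  set a := √(2 * E / F κ) with ha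
  have hu : Tendsto (fun ε => intervalParam (Am ε) (Ap ε) t) (𝓝 0) (𝓝 (a * t)) := by
    have h := ((hAp.add hAm).div_const 2).add (((hAp.sub hAm).div_const 2).mul_const t)
    rw [show (a + -a) / 2 + (a - -a) / 2 * t = a * t by ring] at h
    exact h
  have hx : Tendsto (fun ε => κ - ε * intervalParam (Am ε) (Ap ε) t) (𝓝 0) (𝓝 κ) := by
    simpa using tendsto_const_nhds.sub (tendsto_id.mul hu)
  have hG : 2 * E - F κ * (a * t) ^ 2 = 2 * E * (1 - t ^ 2) := by
    rw [mul_pow, ha, sq_sqrt (by positivity)]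
    field_simp
  have hpos : 0 < 1 - t ^ 2 := by nlinarith [ht.1, ht.2]
  have hlim := ((hAp.sub hAm).div_const 2).mul (((hR.tendsto.comp hx).sqrt.mul
    (tendsto_const_nhds.sub ((hF.tendsto.comp hx).mul (hu.pow 2))).sqrt).inv₀
    (by rw [hG]; positivity))
  have hval : (a - -a) / 2 * (√(R κ) * √(2 * E - F κ * (a * t) ^ 2))⁻¹
      = (√(R κ * F κ))⁻¹ * (√(1 - t ^ 2))⁻¹ := by
    rw [hG, ha, sqrt_mul (by positivity), sqrt_mul hRκ.le, sqrt_div (by positivity)]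
    field_simp
    ring
  rw [hval] at hlim
  exact hlim

end PeriodIntegral

/-- The period `T(ε) = 2∫_{A₋(ε)}^{A₊(ε)} du/(√(R(κ−εu))√(2Ê−F(κ−εu)u²))`
of the latitude oscillation tends to `2π/√(R(κ)F(κ))` as `ε → 0`; the integral is a
convergent improper integral for all sufficiently small `|ε|`. -/
theorem stmt_7 (R F : ℝ → ℝ) (U : Set ℝ) (hU : IsOpen U) (κ : ℝ) (hκ : κ ∈ U)
    (hR : ContDiffOn ℝ 1 R U) (hF : ContDiffOn ℝ 1 F U)
    (hRpos : ∀ x ∈ U, 0 < R x) (hFpos : ∀ x ∈ U, 0 < F x)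
    (E : ℝ) (hE : 0 < E) (ε₀ : ℝ) (hε₀ : 0 < ε₀) (Ap Am : ℝ → ℝ)
    (hApc : ContinuousOn Ap (Set.Ioo (-ε₀) ε₀)) (hAmc : ContinuousOn Am (Set.Ioo (-ε₀) ε₀))
    (hAp0 : Ap 0 = Real.sqrt (2 * E / F κ)) (hAm0 : Am 0 = -Real.sqrt (2 * E / F κ))
    (hroots : ∀ ε ∈ Set.Ioo (-ε₀) ε₀,
      2 * E - F (κ - ε * Ap ε) * (Ap ε) ^ 2 = 0
      ∧ 2 * E - F (κ - ε * Am ε) * (Am ε) ^ 2 = 0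
      ∧ deriv (fun u => 2 * E - F (κ - ε * u) * u ^ 2) (Ap ε) ≠ 0
      ∧ deriv (fun u => 2 * E - F (κ - ε * u) * u ^ 2) (Am ε) ≠ 0) :
    (∀ᶠ ε in 𝓝 (0 : ℝ), IntervalIntegrable
        (fun u => (Real.sqrt (R (κ - ε * u)) * Real.sqrt (2 * E - F (κ - ε * u) * u ^ 2))⁻¹)
        volume (Am ε) (Ap ε))
    ∧ Tendsto
        (fun ε => 2 * ∫ u in (Am ε)..(Ap ε),
          (Real.sqrt (R (κ - ε * u)) * Real.sqrt (2 * E - F (κ - ε * u) * u ^ 2))⁻¹)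
        (𝓝 0) (𝓝 (2 * π / Real.sqrt (R κ * F κ))) := by
  have hFκ : 0 < F κ := hFpos κ hκ
  have hRκ : 0 < R κ := hRpos κ hκ
  have ha2 : F κ * √(2 * E / F κ) ^ 2 = 2 * E := by
    rw [sq_sqrt (by positivity)]
    field_simp
  have hε : Ioo (-ε₀) ε₀ ∈ 𝓝 (0 : ℝ) := Ioo_mem_nhds (by linarith) hε₀
  have hApt : Tendsto Ap (𝓝 0) (𝓝 √(2 * E / F κ)) := hAp0 ▸ hApc.continuousAt hε
  have hAmt : Tendsto Am (𝓝 0) (𝓝 (-√(2 * E / F κ))) := hAm0 ▸ hAmc.continuousAt hε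
  obtain ⟨C, hC⟩ := exists_eventually_norm_periodIntegrand_le hU hκ hR.continuousOn hRκ
    (hF.differentiableOn one_ne_zero)
    ((hF.continuousOn_deriv_of_isOpen hU le_rfl).continuousAt (hU.mem_nhds hκ)) hE
    (sqrt_pos.2 (by positivity)) ha2 hApt hAmt
    (eventually_of_mem hε fun ε hε => ⟨(hroots ε hε).1, (hroots ε hε).2.1⟩)
  refine ⟨hC.mono fun ε h => intervalIntegrable_of_le_inv_sqrt h.1 h.2.1 h.2.2, ?_⟩
  have hT := (tendsto_intervalIntegral_of_le_inv_sqrt (hC.mono fun _ h => h.1)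
    (hC.mono fun _ h => h.2.1) (hC.mono fun _ h => h.2.2) fun t ht =>
      tendsto_mul_periodIntegrand_intervalParam (hR.continuousOn.continuousAt (hU.mem_nhds hκ))
        (hF.continuousOn.continuousAt (hU.mem_nhds hκ)) hRκ hFκ hE hApt hAmt ht).const_mul 2
  rw [show 2 * π / √(R κ * F κ) = 2 * ((√(R κ * F κ))⁻¹ * π) by ring]
  exact hT
end
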